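/- One-step error of the second-order Taylor (Milstein) scheme for ODEs driven by a smooth path (estimate (4.5)): In the setting below, there exists a constant C, depending only on d and l, such that for all z ∈ ℝ^d and all 0 ≤ s ≤ t ≤ T, |Φ(z;s,t) − Ψ(z;s,t)| ≤ C · sup_{1≤i,j,p≤l} ‖D^{(i)}D^{(j)}g^{(p)}‖_∞ · ( ∫_s^t |ẋ_u| du )³. -/

import Mathlib

/-!
Write `D^{(i)}` for the derivation along the `i`-th column of `g`. Along a solution `y` of
`ẏ = g(y)ẋ`, the chain rule and the fundamental theorem of calculus (applied off the countable
set where `ẋ` jumps) give `f(y_v) - f(y_s) = ∫_s^v ∑_i ẋ^{(i)}_r (D^{(i)}f)(y_r) dr` for every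
`C¹` map `f`. Applying this identity three times, starting from `f = id`, writes `y_t` as the
Milstein step `Ψ(y_s;s,t)` plus a triple iterated integral of `ẋ ⊗ ẋ ⊗ ẋ` against
`D^{(i)}D^{(j)}g^{(p)}(y)`, which is at most `l³ M (∫_s^t |ẋ|)³`.

A priori the integrand `g(y)ẋ` of the integral equation need not be integrable. It is, because
the primitive of an arbitrary function is a.e. measurable, so `g(y)ẋ` is measurable and dominated
by `sup |g| · |ẋ|`.
-/

open Set MeasureTheory
open scoped ENNReal

noncomputable section

/-- `ℝ^m` with the Euclidean norm. -/
abbrev Vec (m : ℕ) := EuclideanSpace ℝ (Fin m)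

/-- Sup "norm" `sup_{t ∈ [a,b]} ‖f t‖` as an extended nonnegative real. -/
noncomputable def supENorm {E : Type*} [NormedAddCommGroup E] (a b : ℝ) (f : ℝ → E) : ℝ≥0∞ :=
  ⨆ t : Icc a b, ENNReal.ofReal ‖f t‖

/-- γ-Hölder seminorm `sup_{a ≤ s < t ≤ b} ‖f t - f s‖/(t-s)^γ` as an extended
nonnegative real. -/
noncomputable def holderENorm {E : Type*} [NormedAddCommGroup E] (γ a b : ℝ) (f : ℝ → E) :
    ℝ≥0∞ :=
  ⨆ p : {p : ℝ × ℝ // a ≤ p.1 ∧ p.1 < p.2 ∧ p.2 ≤ b},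
    ENNReal.ofReal (‖f p.1.2 - f p.1.1‖ / (p.1.2 - p.1.1) ^ γ)

/-- `g` is `C³`, bounded with bounded derivatives up to order three. -/
def IsC3Bounded {E F : Type*} [NormedAddCommGroup E] [NormedSpace ℝ E]
    [NormedAddCommGroup F] [NormedSpace ℝ F] (g : E → F) : Prop :=
  ContDiff ℝ 3 g ∧ ∀ n : ℕ, n ≤ 3 → ∃ B : ℝ, ∀ z : E, ‖iteratedFDeriv ℝ n g z‖ ≤ B

/-- The vector field `D^{(i)}g^{(j)} = ∑_p g^{(i)}_p ∂_p g^{(j)}`: the derivative of the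
`j`-th column of `g` in the direction of the `i`-th column. -/
noncomputable def Dvf (d l : ℕ) (g : Vec d → Vec l →L[ℝ] Vec d) (i j : Fin l)
    (z : Vec d) : Vec d :=
  fderiv ℝ (fun w => g w (EuclideanSpace.single j (1 : ℝ))) z
    (g z (EuclideanSpace.single i (1 : ℝ)))

/-- The vector field `D^{(i)}D^{(j)}g^{(p)}`. -/
noncomputable def DDvf (d l : ℕ) (g : Vec d → Vec l →L[ℝ] Vec d) (i j p : Fin l)
    (z : Vec d) : Vec d :=
  fderiv ℝ (fun w => Dvf d l g j p w) z (g z (EuclideanSpace.single i (1 : ℝ)))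

/-- `x` is continuous on `[0,T]` and piecewise continuously differentiable with (piecewise)
derivative `x'`: there is a partition `0 = τ_0 < ⋯ < τ_N = T` such that `x'` is continuous on
each `[τ_k, τ_{k+1}]` and is the derivative of `x` on each `(τ_k, τ_{k+1})`. -/
def PiecewiseC1 (l : ℕ) (T : ℝ) (x x' : ℝ → Vec l) : Prop :=
  ContinuousOn x (Icc 0 T) ∧
  ∃ (N : ℕ) (τ : ℕ → ℝ), τ 0 = 0 ∧ τ N = T ∧ (∀ k < N, τ k < τ (k + 1)) ∧
    ∀ k < N, ContinuousOn x' (Icc (τ k) (τ (k + 1))) ∧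
      ∀ t ∈ Ioo (τ k) (τ (k + 1)), HasDerivAt x (x' t) t

/-- `y` solves, on `[s,t]`, the ODE `ẏ_u = g(y_u) ẋ_u` with `y_s = z`, in integral form. -/
def OdeSol (d l : ℕ) (g : Vec d → Vec l →L[ℝ] Vec d) (x' : ℝ → Vec l) (s t : ℝ)
    (z : Vec d) (y : ℝ → Vec d) : Prop :=
  y s = z ∧ ∀ u ∈ Icc s t, y u = z + ∫ v in s..u, g (y v) (x' v)

/-- The second-order Taylor (Milstein) numerical flow
`Ψ(z;s,t) = z + g(z)(x_t - x_s) + ∑_{i,j} (D^{(i)}g^{(j)})(z) ∫_s^t (x^{(i)}_u - x^{(i)}_s) ẋ^{(j)}_u du`. -/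
noncomputable def Psi (d l : ℕ) (g : Vec d → Vec l →L[ℝ] Vec d) (x x' : ℝ → Vec l)
    (s t : ℝ) (z : Vec d) : Vec d :=
  z + g z (x t - x s) +
    ∑ i : Fin l, ∑ j : Fin l,
      (∫ u in s..t, (x u i - x s i) * x' u j) • Dvf d l g i j z

/-- The entries of the Lévy area `x²_{st} = ∫_s^t (x_u - x_s) ⊗ ẋ_u du` of a smooth path. -/
noncomputable def x2Entry (l : ℕ) (x x' : ℝ → Vec l) (s t : ℝ) (i j : Fin l) : ℝ :=
  ∫ u in s..t, (x u i - x s i) * x' u j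

/-- Euclidean norm of the Lévy area `x²_{st}` of a smooth path. -/
noncomputable def x2Norm (l : ℕ) (x x' : ℝ → Vec l) (s t : ℝ) : ℝ :=
  Real.sqrt (∑ i : Fin l, ∑ j : Fin l, (x2Entry l x x' s t i j) ^ 2)

/-- The rough-path norm `‖x‖_{γ,rough} = sup_{[0,T]} |x| + γ-Hölder seminorm of x
+ sup_{s<t} |x²_{st}|/(t-s)^{2γ}` of a smooth path. -/
noncomputable def roughNormSmooth (l : ℕ) (γ T : ℝ) (x x' : ℝ → Vec l) : ℝ :=
  (supENorm 0 T x + holderENorm γ 0 T x +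
    ⨆ p : {p : ℝ × ℝ // 0 ≤ p.1 ∧ p.1 < p.2 ∧ p.2 ≤ T},
      ENNReal.ofReal (x2Norm l x x' p.1.1 p.1.2 / (p.1.2 - p.1.1) ^ (2 * γ))).toReal

open Filter Topology intervalIntegral

section Coordinates

variable {ι : Type*} [Fintype ι]

theorem ContinuousLinearMap.apply_eq_sum_smul_single [DecidableEq ι] {F : Type*}
    [NormedAddCommGroup F] [NormedSpace ℝ F] (A : EuclideanSpace ℝ ι →L[ℝ] F)
    (w : EuclideanSpace ℝ ι) : A w = ∑ i, w i • A (EuclideanSpace.single i 1) := by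
  conv_lhs => rw [← (EuclideanSpace.basisFun ι ℝ).sum_repr w]
  simp [map_sum, map_smul]

variable {E : Type*} [NormedAddCommGroup E] [NormedSpace ℝ E] {s t v : ℝ}

theorem IntervalIntegrable.sum_smul_const {a : ι → ℝ → ℝ}
    (ha : ∀ i, IntervalIntegrable (a i) volume s v) (c : ι → E) :
    IntervalIntegrable (fun r => ∑ i, a i r • c i) volume s v := by
  have := IntervalIntegrable.sum Finset.univ (f := fun i r => a i r • c i)
    fun i _ => (ha i).smul_continuousOn continuousOn_const
  simpa only [Finset.sum_fn] using this

theorem intervalIntegral.integral_sum_smul_const [CompleteSpace E] {a : ι → ℝ → ℝ}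
    (ha : ∀ i, IntervalIntegrable (a i) volume s v) (c : ι → E) :
    ∫ r in s..v, ∑ i, a i r • c i = ∑ i, (∫ r in s..v, a i r) • c i := by
  rw [integral_finsetSum fun i _ => (ha i).smul_continuousOn continuousOn_const]
  simp only [integral_smul_const]

theorem IntervalIntegrable.apply {a : ℝ → EuclideanSpace ℝ ι}
    (ha : IntervalIntegrable a volume s v) (i : ι) :
    IntervalIntegrable (fun r => a r i) volume s v :=
  ⟨(EuclideanSpace.proj i : EuclideanSpace ℝ ι →L[ℝ] ℝ).integrable_comp ha.1,
    (EuclideanSpace.proj i : EuclideanSpace ℝ ι →L[ℝ] ℝ).integrable_comp ha.2⟩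

theorem IntervalIntegrable.sum_smul_continuousOn {a : ℝ → EuclideanSpace ℝ ι}
    (ha : IntervalIntegrable a volume s v) {φ : ι → ℝ → E}
    (hφ : ∀ i, ContinuousOn (φ i) (uIcc s v)) :
    IntervalIntegrable (fun r => ∑ i, a r i • φ i r) volume s v := by
  have := IntervalIntegrable.sum Finset.univ (f := fun i r => a r i • φ i r)
    fun i _ => (ha.apply i).smul_continuousOn (hφ i)
  simpa only [Finset.sum_fn] using this

theorem norm_integral_sum_smul_le {a : ℝ → EuclideanSpace ℝ ι} {φ : ι → ℝ → E} {c : ℝ}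
    (ha : IntervalIntegrable (fun r => ‖a r‖) volume s t) (hv : v ∈ Icc s t)
    (hφ : ∀ i, ∀ r ∈ Icc s t, ‖φ i r‖ ≤ c) :
    ‖∫ r in s..v, ∑ i, a r i • φ i r‖ ≤ Fintype.card ι * c * ∫ r in s..t, ‖a r‖ := by
  have hc : 0 ≤ (Fintype.card ι : ℝ) * c := by
    rcases isEmpty_or_nonempty ι with hι | ⟨⟨i⟩⟩
    · simp
    · exact mul_nonneg (Nat.cast_nonneg _)
        ((norm_nonneg _).trans (hφ i s (left_mem_Icc.2 (hv.1.trans hv.2))))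
  have hpointwise : ∀ r ∈ Icc s t, ‖∑ i, a r i • φ i r‖ ≤ Fintype.card ι * c * ‖a r‖ := by
    intro r hr
    calc ‖∑ i, a r i • φ i r‖ ≤ ∑ i, ‖a r i‖ * ‖φ i r‖ := by
          simpa only [norm_smul] using norm_sum_le Finset.univ fun i => a r i • φ i r
      _ ≤ ∑ _i : ι, ‖a r‖ * c := Finset.sum_le_sum fun i _ =>
          mul_le_mul (PiLp.norm_apply_le (β := fun _ : ι => ℝ) (a r) i) (hφ i r hr)
            (norm_nonneg _) (norm_nonneg _)
      _ = Fintype.card ι * c * ‖a r‖ := by simp; ring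
  have hint := ha.const_mul (Fintype.card ι * c)
  calc ‖∫ r in s..v, ∑ i, a r i • φ i r‖
      ≤ ∫ r in s..v, Fintype.card ι * c * ‖a r‖ :=
        norm_integral_le_of_norm_le hv.1
          (ae_of_all _ fun r hr => hpointwise r ⟨hr.1.le, hr.2.trans hv.2⟩)
          (hint.mono_set (uIcc_subset_uIcc_left (Icc_subset_uIcc hv)))
    _ ≤ ∫ r in s..t, Fintype.card ι * c * ‖a r‖ :=
        integral_mono_interval le_rfl hv.1 hv.2
          (ae_of_all _ fun r => mul_nonneg hc (norm_nonneg _)) hint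
    _ = Fintype.card ι * c * ∫ r in s..t, ‖a r‖ := integral_const_mul _ _

end Coordinates

section DrivenCurve

variable {V E : Type*} [NormedAddCommGroup V] [NormedSpace ℝ V] [NormedAddCommGroup E]
  [NormedSpace ℝ E] {ι : Type*} [Fintype ι]

structure IsDrivenCurve (g : V → EuclideanSpace ℝ ι →L[ℝ] V) (x' : ℝ → EuclideanSpace ℝ ι)
    (s t : ℝ) (y : ℝ → V) : Prop where
  le : s ≤ t
  continuousOn : ContinuousOn y (Icc s t)
  intervalIntegrable : IntervalIntegrable x' volume s t
  exists_hasDerivAt :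
    ∃ S : Set ℝ, S.Countable ∧ ∀ u ∈ Ioo s t \ S, HasDerivAt y (g (y u) (x' u)) u

variable {g : V → EuclideanSpace ℝ ι →L[ℝ] V} {x' : ℝ → EuclideanSpace ℝ ι} {s t v : ℝ}
  {y : ℝ → V}

namespace IsDrivenCurve

theorem intervalIntegrable_of_mem (hy : IsDrivenCurve g x' s t y) (hv : v ∈ Icc s t) :
    IntervalIntegrable x' volume s v :=
  hy.intervalIntegrable.mono_set (uIcc_subset_uIcc_left (Icc_subset_uIcc hv))

theorem intervalIntegrable_sum_smul (hy : IsDrivenCurve g x' s t y) {φ : ι → ℝ → E}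
    (hφ : ∀ i, ContinuousOn (φ i) (Icc s t)) (hv : v ∈ Icc s t) :
    IntervalIntegrable (fun r => ∑ i, x' r i • φ i r) volume s v :=
  (hy.intervalIntegrable_of_mem hv).sum_smul_continuousOn fun i =>
    (hφ i).mono (uIcc_subset_Icc (left_mem_Icc.2 hy.le) hv)

theorem continuousOn_primitive_apply (hy : IsDrivenCurve g x' s t y) (i : ι) :
    ContinuousOn (fun r => ∫ w in s..r, x' w i) (Icc s t) := by
  simpa only [uIcc_of_le hy.le] using
    continuousOn_primitive_interval' (hy.intervalIntegrable.apply i) left_mem_uIcc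

end IsDrivenCurve

variable [DecidableEq ι]

/-- The derivation `D^{(i)}` of the paper, applied to `f`. -/
def lieDeriv (g : V → EuclideanSpace ℝ ι →L[ℝ] V) (f : V → E) (i : ι) (w : V) : E :=
  fderiv ℝ f w (g w (EuclideanSpace.single i 1))

variable (g x' s y) in
def taylorRemainder₁ (f : V → E) (v : ℝ) : E :=
  f (y v) - f (y s) - ∑ i, (∫ r in s..v, x' r i) • lieDeriv g f i (y s)

variable (g x' s y) in
def taylorRemainder₂ (f : V → E) (v : ℝ) : E :=
  taylorRemainder₁ g x' s y f v -
    ∑ j, ∑ i, (∫ r in s..v, (∫ w in s..r, x' w i) * x' r j) •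
      lieDeriv g (lieDeriv g f j) i (y s)

variable {f : V → E}

theorem fderiv_apply_eq_sum_lieDeriv (w : V) (ξ : EuclideanSpace ℝ ι) :
    fderiv ℝ f w (g w ξ) = ∑ i, ξ i • lieDeriv g f i w :=
  ((fderiv ℝ f w).comp (g w)).apply_eq_sum_smul_single ξ

omit [Fintype ι] in
theorem lieDeriv_id (i : ι) : lieDeriv g id i = fun w => g w (EuclideanSpace.single i 1) := by
  ext w
  simp [lieDeriv]

theorem ContDiff.lieDeriv {n : ℕ} (hf : ContDiff ℝ (n + 1) f) (hg : ContDiff ℝ n g) (i : ι) :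
    ContDiff ℝ n (lieDeriv g f i) :=
  (hf.fderiv_right le_rfl).clm_apply (hg.clm_apply contDiff_const)

theorem continuous_lieDeriv (hf : ContDiff ℝ 1 f) (hg : Continuous g) (i : ι) :
    Continuous (lieDeriv g f i) :=
  (hf.continuous_fderiv one_ne_zero).clm_apply (hg.clm_apply continuous_const)

namespace IsDrivenCurve

theorem continuousOn_taylorRemainder₁ (hy : IsDrivenCurve g x' s t y) (hf : Continuous f) :
    ContinuousOn (taylorRemainder₁ g x' s y f) (Icc s t) :=
  ((hf.comp_continuousOn hy.continuousOn).sub continuousOn_const).sub <|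
    continuousOn_finsetSum _ fun i _ => (hy.continuousOn_primitive_apply i).smul continuousOn_const

variable [CompleteSpace E]

theorem sub_eq_integral (hy : IsDrivenCurve g x' s t y) (hg : Continuous g)
    (hf : ContDiff ℝ 1 f) (hv : v ∈ Icc s t) :
    f (y v) - f (y s) = ∫ r in s..v, ∑ i, x' r i • lieDeriv g f i (y r) := by
  obtain ⟨S, hS, hderiv⟩ := hy.exists_hasDerivAt
  refine (integral_eq_of_hasDerivAt_off_countable_of_le (f ∘ y) _ hv.1 hS ?_ ?_ ?_).symm
  · exact hf.continuous.comp_continuousOn (hy.continuousOn.mono (Icc_subset_Icc le_rfl hv.2))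
  · intro u hu
    rw [← fderiv_apply_eq_sum_lieDeriv]
    exact (hf.differentiable one_ne_zero (y u)).hasFDerivAt.comp_hasDerivAt u
      (hderiv u ⟨⟨hu.1.1, hu.1.2.trans_le hv.2⟩, hu.2⟩)
  · exact hy.intervalIntegrable_sum_smul
      (fun i => (continuous_lieDeriv hf hg i).comp_continuousOn hy.continuousOn) hv

theorem taylorRemainder₁_eq_integral (hy : IsDrivenCurve g x' s t y) (hg : Continuous g)
    (hf : ContDiff ℝ 1 f) (hv : v ∈ Icc s t) :
    taylorRemainder₁ g x' s y f v =
      ∫ r in s..v, ∑ i, x' r i • (lieDeriv g f i (y r) - lieDeriv g f i (y s)) := by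
  simp only [smul_sub, Finset.sum_sub_distrib]
  rw [integral_sub (hy.intervalIntegrable_sum_smul (φ := fun i r => lieDeriv g f i (y r))
      (fun i => (continuous_lieDeriv hf hg i).comp_continuousOn hy.continuousOn) hv)
    (hy.intervalIntegrable_sum_smul (fun i => continuousOn_const) hv),
    ← hy.sub_eq_integral hg hf hv,
    integral_sum_smul_const fun i => (hy.intervalIntegrable_of_mem hv).apply i]
  rfl

theorem taylorRemainder₂_eq_integral (hy : IsDrivenCurve g x' s t y) (hg : Continuous g)
    (hf : ContDiff ℝ 1 f) (hv : v ∈ Icc s t) :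
    taylorRemainder₂ g x' s y f v =
      ∫ r in s..v, ∑ j, x' r j • taylorRemainder₁ g x' s y (lieDeriv g f j) r := by
  have hsplit : ∀ r, ∑ j, x' r j • (lieDeriv g f j (y r) - lieDeriv g f j (y s)) =
      ∑ j, x' r j • taylorRemainder₁ g x' s y (lieDeriv g f j) r +
        ∑ j, ∑ i, ((∫ w in s..r, x' w i) * x' r j) • lieDeriv g (lieDeriv g f j) i (y s) := by
    intro r
    rw [← Finset.sum_add_distrib]
    refine Finset.sum_congr rfl fun j _ => ?_
    simp only [taylorRemainder₁, mul_comm _ (x' r j), ← smul_smul, ← Finset.smul_sum, ← smul_add,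
      sub_add_cancel]
  have hprim : ∀ i j, IntervalIntegrable (fun r => (∫ w in s..r, x' w i) * x' r j) volume s v :=
    fun i j => ((hy.intervalIntegrable_of_mem hv).apply j).continuousOn_mul
      ((hy.continuousOn_primitive_apply i).mono (uIcc_subset_Icc (left_mem_Icc.2 hy.le) hv))
  have harea := integral_sum_smul_const (fun p : ι × ι => hprim p.2 p.1)
    fun p => lieDeriv g (lieDeriv g f p.1) p.2 (y s)
  have hareaInt := IntervalIntegrable.sum_smul_const (fun p : ι × ι => hprim p.2 p.1)
    fun p => lieDeriv g (lieDeriv g f p.1) p.2 (y s)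
  simp only [Fintype.sum_prod_type] at harea hareaInt
  rw [taylorRemainder₂, hy.taylorRemainder₁_eq_integral hg hf hv]
  simp only [hsplit]
  rw [integral_add (hy.intervalIntegrable_sum_smul
      (fun j => hy.continuousOn_taylorRemainder₁ (continuous_lieDeriv hf hg j)) hv) hareaInt, harea,
    add_sub_cancel_right]

theorem norm_taylorRemainder₂_le (hy : IsDrivenCurve g x' s t y) (hg : ContDiff ℝ 2 g)
    (hf : ContDiff ℝ 3 f) {M : ℝ}
    (hM : ∀ i j p w, ‖lieDeriv g (lieDeriv g (lieDeriv g f p) j) i w‖ ≤ M) :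
    ‖taylorRemainder₂ g x' s y f t‖ ≤ Fintype.card ι ^ 3 * M * (∫ r in s..t, ‖x' r‖) ^ 3 := by
  set n : ℝ := (Fintype.card ι : ℝ)
  set A := ∫ r in s..t, ‖x' r‖
  have hnorm : IntervalIntegrable (fun r => ‖x' r‖) volume s t := hy.intervalIntegrable.norm
  have hD1 : ∀ j, ContDiff ℝ 2 (lieDeriv g f j) := hf.lieDeriv hg
  have hD2 : ∀ j i, ContDiff ℝ 1 (lieDeriv g (lieDeriv g f j) i) :=
    fun j => (hD1 j).lieDeriv (hg.of_le (by norm_num))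
  have hosc : ∀ i j, ∀ r ∈ Icc s t,
      ‖lieDeriv g (lieDeriv g f j) i (y r) - lieDeriv g (lieDeriv g f j) i (y s)‖ ≤ n * M * A := by
    intro i j r hr
    rw [hy.sub_eq_integral hg.continuous (hD2 j i) hr]
    exact norm_integral_sum_smul_le hnorm hr fun p w _ => hM p i j (y w)
  have hrem₁ : ∀ j, ∀ r ∈ Icc s t,
      ‖taylorRemainder₁ g x' s y (lieDeriv g f j) r‖ ≤ n * (n * M * A) * A := by
    intro j r hr
    rw [hy.taylorRemainder₁_eq_integral hg.continuous ((hD1 j).of_le (by norm_num)) hr]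
    exact norm_integral_sum_smul_le hnorm hr fun i w hw => hosc i j w hw
  calc ‖taylorRemainder₂ g x' s y f t‖
      = ‖∫ r in s..t, ∑ j, x' r j • taylorRemainder₁ g x' s y (lieDeriv g f j) r‖ := by
        rw [hy.taylorRemainder₂_eq_integral hg.continuous (hf.of_le (by norm_num))
          (right_mem_Icc.2 hy.le)]
    _ ≤ n * (n * (n * M * A) * A) * A :=
        norm_integral_sum_smul_le hnorm (right_mem_Icc.2 hy.le) hrem₁
    _ = n ^ 3 * M * A ^ 3 := by ring

end IsDrivenCurve

end DrivenCurve

theorem aestronglyMeasurable_primitive {E : Type*} [NormedAddCommGroup E] [NormedSpace ℝ E]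
    (F : ℝ → E) (s t : ℝ) :
    AEStronglyMeasurable (fun u => ∫ v in s..u, F v) (volume.restrict (Icc s t)) := by
  -- off `D` the interval integral takes its junk value `0`
  set D := {u ∈ Icc s t | IntegrableOn F (Ioc s u)}
  have hD : OrdConnected D := ⟨fun u hu u' hu' v hv =>
    ⟨⟨hu.1.1.trans hv.1, hv.2.trans hu'.1.2⟩, hu'.2.mono_set (Ioc_subset_Ioc_right hv.2)⟩⟩
  have hIcc : ∀ u ∈ D, ContinuousOn (fun u => ∫ v in s..u, F v) (Icc s u) := fun u hu => by
    simpa only [uIcc_of_le hu.1.1] using continuousOn_primitive_interval'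
      ((intervalIntegrable_iff_integrableOn_Ioc_of_le hu.1.1).2 hu.2) left_mem_uIcc
  have hcont : ContinuousOn (fun u => ∫ v in s..u, F v) D := by
    intro u hu
    by_cases hmax : ∃ u' ∈ D, u < u'
    · obtain ⟨u', hu', huu'⟩ := hmax
      refine (continuousWithinAt_inter (Iic_mem_nhds huu')).1 ?_
      exact (hIcc u' hu').mono (fun v hv => ⟨hv.1.1.1, hv.2⟩) u ⟨hu, huu'.le⟩
    · push Not at hmax
      exact (hIcc u hu).mono (fun v hv => ⟨hv.1.1, hmax v hv⟩) u hu
  have hzero : ∀ u ∈ Icc s t \ D, ∫ v in s..u, F v = 0 := fun u hu =>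
    integral_undef fun h =>
      hu.2 ⟨hu.1, (intervalIntegrable_iff_integrableOn_Ioc_of_le hu.1.1).1 h⟩
  rw [← union_sdiff_cancel (show D ⊆ Icc s t from fun u hu => hu.1),
    aestronglyMeasurable_union_iff]
  refine ⟨hcont.aestronglyMeasurable hD.measurableSet,
    (aestronglyMeasurable_const (b := (0 : E))).congr ?_⟩
  exact (ae_restrict_iff' (measurableSet_Icc.diff hD.measurableSet)).2
    (ae_of_all _ fun u hu => (hzero u hu).symm)

theorem OdeSol.isDrivenCurve {d l : ℕ} {g : Vec d → Vec l →L[ℝ] Vec d} {x' : ℝ → Vec l}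
    {s t : ℝ} {z : Vec d} {y : ℝ → Vec d} (hy : OdeSol d l g x' s t z y) (hst : s ≤ t)
    (hg : Continuous g) {B : ℝ} (hB : ∀ w, ‖g w‖ ≤ B) (hx' : IntervalIntegrable x' volume s t)
    {S : Set ℝ} (hS : S.Countable) (hx'S : ∀ u ∈ Ioo s t \ S, ContinuousAt x' u) :
    IsDrivenCurve g x' s t y := by
  set F := fun v => g (y v) (x' v)
  have hyeq := hy.2
  have hx'Icc : IntegrableOn x' (Icc s t) :=
    (intervalIntegrable_iff_integrableOn_Icc_of_le hst).1 hx'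
  have hymeas : AEStronglyMeasurable y (volume.restrict (Icc s t)) :=
    (aestronglyMeasurable_const.add (aestronglyMeasurable_primitive F s t)).congr <|
      (ae_restrict_iff' measurableSet_Icc).2 (ae_of_all _ fun u hu => (hyeq u hu).symm)
  have hF : IntegrableOn F (Icc s t) := by
    refine Integrable.mono' (hx'Icc.norm.const_mul B) ?_ (ae_of_all _ fun v =>
      ((g (y v)).le_opNorm (x' v)).trans (mul_le_mul_of_nonneg_right (hB _) (norm_nonneg _)))
    exact isBoundedBilinearMap_apply.continuous.comp_aestronglyMeasurable
      ((hg.comp_aestronglyMeasurable hymeas).prodMk hx'Icc.aestronglyMeasurable)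
  have hcont : ContinuousOn y (Icc s t) := by
    refine (continuousOn_const.add ?_).congr hyeq
    simpa only [uIcc_of_le hst] using continuousOn_primitive_interval
      (by rwa [uIcc_of_le hst] : IntegrableOn F (uIcc s t))
  refine ⟨hst, hcont, hx', S, hS, fun u hu => ?_⟩
  have hnhds : Icc s t ∈ 𝓝 u := Icc_mem_nhds hu.1.1 hu.1.2
  have hFu : ContinuousAt F u :=
    (hg.continuousAt.comp (hcont.continuousAt hnhds)).clm_apply (hx'S u hu)
  have hint : IntervalIntegrable F volume s u :=
    (intervalIntegrable_iff_integrableOn_Icc_of_le hu.1.1.le).2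
      (hF.mono_set (Icc_subset_Icc le_rfl hu.1.2.le))
  exact ((integral_hasDerivAt_right hint ⟨Icc s t, hnhds, hF.aestronglyMeasurable⟩ hFu).const_add
    z).congr_of_eventuallyEq (eventually_of_mem hnhds hyeq)

theorem exists_mem_Ioo_of_notMem_range {τ : ℕ → ℝ} {u : ℝ} (h0 : τ 0 ≤ u) (hu : u ∉ range τ) :
    ∀ {n : ℕ}, u < τ n → ∃ k < n, u ∈ Ioo (τ k) (τ (k + 1))
  | 0, h => absurd h0 (not_le.2 h)
  | n + 1, h => by
    rcases lt_or_ge u (τ n) with h' | h'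
    · obtain ⟨k, hk, huk⟩ := exists_mem_Ioo_of_notMem_range h0 hu h'
      exact ⟨k, by omega, huk⟩
    · exact ⟨n, by omega, lt_of_le_of_ne h' fun e => hu ⟨n, e⟩, h⟩

namespace PiecewiseC1

variable {l : ℕ} {T : ℝ} {x x' : ℝ → Vec l}

theorem exists_countable (hx : PiecewiseC1 l T x x') :
    ∃ S : Set ℝ, S.Countable ∧ ∀ u ∈ Ioo 0 T \ S, HasDerivAt x (x' u) u ∧ ContinuousAt x' u := by
  obtain ⟨-, N, τ, hτ0, hτN, -, hpiece⟩ := hx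
  refine ⟨range τ, countable_range τ, fun u hu => ?_⟩
  obtain ⟨k, hk, huk⟩ :=
    exists_mem_Ioo_of_notMem_range (hτ0 ▸ hu.1.1.le) hu.2 (hτN ▸ hu.1.2 : u < τ N)
  exact ⟨(hpiece k hk).2 u huk, (hpiece k hk).1.continuousAt (Icc_mem_nhds huk.1 huk.2)⟩

theorem intervalIntegrable (hx : PiecewiseC1 l T x x') : IntervalIntegrable x' volume 0 T := by
  obtain ⟨-, N, τ, hτ0, hτN, hτ, hpiece⟩ := hx
  rw [← hτ0, ← hτN]
  exact IntervalIntegrable.trans_iterate fun k hk =>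
    (hpiece k hk).1.intervalIntegrable_of_Icc (hτ k hk).le

theorem integral_eq_sub (hx : PiecewiseC1 l T x x') {a b : ℝ} (ha : 0 ≤ a) (hab : a ≤ b)
    (hb : b ≤ T) : ∫ r in a..b, x' r = x b - x a := by
  obtain ⟨S, hS, hxS⟩ := hx.exists_countable
  refine integral_eq_of_hasDerivAt_off_countable_of_le x x' hab hS
    (hx.1.mono (Icc_subset_Icc ha hb))
    (fun u hu => (hxS u ⟨⟨ha.trans_lt hu.1.1, hu.1.2.trans_le hb⟩, hu.2⟩).1)
    (hx.intervalIntegrable.mono_set ?_)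
  rw [uIcc_of_le hab, uIcc_of_le (ha.trans (hab.trans hb))]
  exact Icc_subset_Icc ha hb

end PiecewiseC1

theorem Dvf_eq_lieDeriv {d l : ℕ} (g : Vec d → Vec l →L[ℝ] Vec d) (i j : Fin l) :
    Dvf d l g i j = lieDeriv g (lieDeriv g id j) i := by
  rw [lieDeriv_id]
  rfl

theorem DDvf_eq_lieDeriv {d l : ℕ} (g : Vec d → Vec l →L[ℝ] Vec d) (i j p : Fin l) :
    DDvf d l g i j p = lieDeriv g (lieDeriv g (lieDeriv g id p) j) i := by
  rw [← Dvf_eq_lieDeriv]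
  rfl

theorem taylorRemainder₂_id_eq_sub_Psi {d l : ℕ} {g : Vec d → Vec l →L[ℝ] Vec d}
    {x x' : ℝ → Vec l} {s t : ℝ} {y : ℝ → Vec d} (hst : s ≤ t)
    (hx' : IntervalIntegrable x' volume s t) (hx : ∀ v ∈ Icc s t, ∫ r in s..v, x' r = x v - x s) :
    taylorRemainder₂ g x' s y id t = y t - Psi d l g x x' s t (y s) := by
  have hcoord : ∀ v ∈ Icc s t, ∀ i, ∫ r in s..v, x' r i = x v i - x s i := fun v hv i => by
    have hint : IntervalIntegrable x' volume s v :=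
      hx'.mono_set (uIcc_subset_uIcc_left (Icc_subset_uIcc hv))
    simpa [hx v hv] using (EuclideanSpace.proj i : Vec l →L[ℝ] ℝ).intervalIntegral_comp_comm hint
  have hiter : ∀ i j, ∫ r in s..t, (∫ w in s..r, x' w i) * x' r j =
      ∫ r in s..t, (x r i - x s i) * x' r j := fun i j =>
    integral_congr fun r hr => by
      rw [uIcc_of_le hst] at hr
      simp only [hcoord r hr i]
  simp only [taylorRemainder₂, taylorRemainder₁, hiter, hcoord t (right_mem_Icc.2 hst), Psi,
    Dvf_eq_lieDeriv, (g (y s)).apply_eq_sum_smul_single (x t - x s), PiLp.sub_apply]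
  rw [Finset.sum_comm (γ := Fin l)]
  simp only [lieDeriv_id, id]
  abel

/-- **One-step error of the second-order Taylor (Milstein) scheme for ODEs driven by a smooth
path.** There is a constant `C`, depending only on `d` and `l`, such that
`|Φ(z;s,t) - Ψ(z;s,t)| ≤ C · sup_{i,j,p} ‖D^{(i)}D^{(j)}g^{(p)}‖_∞ · (∫_s^t |ẋ_u| du)³`,
where `Φ(z;s,t) = y_t` for the solution `y` of `ẏ = g(y)ẋ`, `y_s = z`. -/
theorem milstein_one_step_error (d l : ℕ) :
    ∃ C : ℝ, 0 < C ∧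
      ∀ (T : ℝ), 0 < T →
      ∀ g : Vec d → Vec l →L[ℝ] Vec d, IsC3Bounded g →
      ∀ x x' : ℝ → Vec l, PiecewiseC1 l T x x' →
      ∀ M : ℝ, (∀ (i j p : Fin l) (z : Vec d), ‖DDvf d l g i j p z‖ ≤ M) →
      ∀ (z : Vec d) (s t : ℝ), 0 ≤ s → s ≤ t → t ≤ T →
      ∀ y : ℝ → Vec d, OdeSol d l g x' s t z y →
        ‖y t - Psi d l g x x' s t z‖ ≤ C * M * (∫ u in s..t, ‖x' u‖) ^ 3 := by
  refine ⟨(l : ℝ) ^ 3 + 1, by positivity, ?_⟩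
  intro T _ g hg x x' hx M hM z s t hs hst htT y hy
  obtain ⟨S, hS, hxS⟩ := hx.exists_countable
  obtain ⟨B, hB⟩ := hg.2 0 (by norm_num)
  have hx' : IntervalIntegrable x' volume s t := hx.intervalIntegrable.mono_set (by
    rw [uIcc_of_le hst, uIcc_of_le (hs.trans (hst.trans htT))]
    exact Icc_subset_Icc hs htT)
  have hcurve : IsDrivenCurve g x' s t y :=
    hy.isDrivenCurve hst hg.1.continuous (B := B) (by simpa using hB) hx' hS
      fun u hu => (hxS u ⟨Ioo_subset_Ioo hs htT hu.1, hu.2⟩).2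
  have hrem := hcurve.norm_taylorRemainder₂_le (hg.1.of_le (by norm_num)) contDiff_id
    (M := M) fun i j p w => DDvf_eq_lieDeriv g i j p ▸ hM i j p w
  rw [taylorRemainder₂_id_eq_sub_Psi hst hx'
    (fun v hv => hx.integral_eq_sub hs hv.1 (hv.2.trans htT)), hy.1, Fintype.card_fin] at hrem
  have hMA : 0 ≤ M * (∫ u in s..t, ‖x' u‖) ^ 3 := by
    rcases l.eq_zero_or_pos with rfl | hl
    · simp [Subsingleton.elim _ (0 : Vec 0)]
    · exact mul_nonneg ((norm_nonneg _).trans (hM ⟨0, hl⟩ ⟨0, hl⟩ ⟨0, hl⟩ z))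
        (pow_nonneg (integral_nonneg hst fun _ _ => norm_nonneg _) 3)
  linarith

end
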